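/- If a string P of length m has a substring of length L all of whose k-mers pass the filter, then P has at least one pseudo-MEM, and the total length of all pseudo-MEMs of P is at most m + (number of pseudo-MEMs − 1)·(k − 2). -/

import Mathlib

/-!
Two pseudo-MEMs `[i₁, j₁]`, `[i₂, j₂]` with `i₁ < i₂` overlap in at most `k - 2` positions:
if they shared `k - 1` positions, every `k`-mer of `[i₁, j₂]` would lie inside one of them, so
`[i₁, j₁]` could be extended to the right. Ordering the pseudo-MEMs by their start, each one
therefore begins at most `k - 2` positions before the previous one ends, and the lengths
telescope to at most `m + (n - 1)(k - 2)`. Existence comes from extending the given window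
to a longest passing interval containing it.
-/

open List

variable {α : Type*}

/-- `substr P i j` is the substring `P[i..j]` (inclusive indices). -/
def substr (P : List α) (i j : ℕ) : List α := (P.drop i).take (j - i + 1)

/-- `IsMEM T P i j` : `P[i..j]` is a maximal exact match of `P` w.r.t. `T`:
it occurs in `T`, and it can be extended neither to the left nor to the right
within `P` while still occurring in `T`. -/
def IsMEM (T P : List α) (i j : ℕ) : Prop :=
  i ≤ j ∧ j < P.length ∧ substr P i j <:+: T ∧
  (i = 0 ∨ ¬ substr P (i - 1) j <:+: T) ∧
  (j = P.length - 1 ∨ ¬ substr P i (j + 1) <:+: T)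

/-- All length-`k` substrings (`k`-mers) of `S` pass the filter `F`. -/
def kmersPass (F : List α → Bool) (k : ℕ) (S : List α) : Prop :=
  ∀ w : List α, w.length = k → w <:+: S → F w = true

/-- `IsPseudoMEM F k L P i j` : `P[i..j]` is a maximal substring of `P` of length
at least `L` all of whose `k`-mers pass the filter `F`. -/
def IsPseudoMEM (F : List α → Bool) (k L : ℕ) (P : List α) (i j : ℕ) : Prop :=
  i ≤ j ∧ j < P.length ∧ L ≤ j - i + 1 ∧ kmersPass F k (substr P i j) ∧
  (i = 0 ∨ ¬ kmersPass F k (substr P (i - 1) j)) ∧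
  (j = P.length - 1 ∨ ¬ kmersPass F k (substr P i (j + 1)))

/-- `F` has no false negatives for the `k`-mers of `T`. -/
def NoFalseNeg (F : List α → Bool) (k : ℕ) (T : List α) : Prop :=
  ∀ w : List α, w.length = k → w <:+: T → F w = true

-- The finite set of (intervals of) pseudo-MEMs of `P`.
open Classical in
noncomputable def pseudoMEMs (F : List α → Bool) (k L : ℕ) (P : List α) :
    Finset (ℕ × ℕ) :=
  (Finset.range P.length ×ˢ Finset.range P.length).filter
    (fun ij => IsPseudoMEM F k L P ij.1 ij.2)

section Substr

variable (P : List α)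

lemma substr_drop {i j q : ℕ} (h : i + q ≤ j) :
    (substr P i j).drop q = substr P (i + q) j := by
  simp only [substr, List.drop_take, List.drop_drop]
  congr 1
  omega

lemma substr_take {i j n : ℕ} (h1 : 1 ≤ n) (h2 : n ≤ j - i + 1) :
    (substr P i j).take n = substr P i (i + n - 1) := by
  simp only [substr, List.take_take]
  congr 1
  omega

lemma substr_infix_substr {i j i' j' : ℕ} (hi : i' ≤ i) (hj : j ≤ j') (hij : i ≤ j) :
    substr P i j <:+: substr P i' j' := by
  have e : substr P i j = ((substr P i' j').drop (i - i')).take (j - i + 1) := by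
    rw [substr_drop P (by omega), substr_take P (by omega) (by omega)]
    congr 1 <;> omega
  rw [e]
  exact (List.take_prefix _ _).isInfix.trans (List.drop_suffix _ _).isInfix

lemma exists_eq_substr_of_infix_substr {w : List α} {i j : ℕ} (hij : i ≤ j) (hw : w ≠ [])
    (h : w <:+: substr P i j) :
    ∃ q, i ≤ q ∧ q + w.length ≤ j + 1 ∧ w = substr P q (q + w.length - 1) := by
  obtain ⟨s, t, hst⟩ := h
  have hpos : 0 < w.length := List.length_pos_iff.2 hw
  have hlen : s.length + w.length ≤ j - i + 1 := by
    have h1 := congrArg List.length hst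
    have h2 : (substr P i j).length ≤ j - i + 1 := by simp [substr]
    simp only [List.length_append] at h1
    omega
  refine ⟨i + s.length, by omega, by omega, ?_⟩
  calc w = ((substr P i j).drop s.length).take w.length := by
        rw [← hst, List.append_assoc, List.drop_left, List.take_left]
    _ = _ := by rw [substr_drop P (by omega), substr_take P (by omega) (by omega)]

end Substr

section KmersPass

variable {F : List α → Bool} {k : ℕ}

lemma kmersPass.of_infix {S T : List α} (h : kmersPass F k S) (hTS : T <:+: S) :
    kmersPass F k T :=
  fun w hw hwT => h w hw (hwT.trans hTS)

/-- `c + k ≤ b + 2` says that `[a, b]` and `[c, d]` share at least `k - 1` positions, so every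
`k`-mer of `[a, d]` lies inside one of them. -/
lemma kmersPass_substr_glue {P : List α} {a b c d : ℕ}
    (hab : kmersPass F k (substr P a b)) (hcd : kmersPass F k (substr P c d))
    (had : a ≤ d) (hov : c + k ≤ b + 2) : kmersPass F k (substr P a d) := by
  intro w hw hwad
  rcases eq_or_ne w [] with rfl | hne
  · exact hab [] hw List.nil_infix
  obtain ⟨q, haq, hqd, hwq⟩ := exists_eq_substr_of_infix_substr P had hne hwad
  have hk : 0 < k := hw ▸ List.length_pos_iff.2 hne
  rw [hw] at hqd hwq
  subst hwq
  by_cases hqb : q + k ≤ b + 1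
  · exact hab _ hw (substr_infix_substr P haq (by omega) (by omega))
  · exact hcd _ hw (substr_infix_substr P (by omega) (by omega) (by omega))

end KmersPass

namespace IsPseudoMEM

variable {F : List α → Bool} {k L : ℕ} {P : List α}

lemma not_kmersPass_of_extends_right {i j i' j' : ℕ} (h : IsPseudoMEM F k L P i j)
    (hi : i' ≤ i) (hj : j < j') (hj' : j' < P.length) :
    ¬ kmersPass F k (substr P i' j') := by
  intro hpass
  have hij := h.1
  rcases h.2.2.2.2.2 with h | h
  · omega
  · exact h (hpass.of_infix (substr_infix_substr P hi (by omega) (by omega)))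

lemma not_kmersPass_of_extends_left {i j i' j' : ℕ} (h : IsPseudoMEM F k L P i j)
    (hi : i' < i) (hj : j ≤ j') :
    ¬ kmersPass F k (substr P i' j') := by
  intro hpass
  have hij := h.1
  rcases h.2.2.2.2.1 with h | h
  · omega
  · exact h (hpass.of_infix (substr_infix_substr P (by omega) hj (by omega)))

lemma end_lt_of_start_lt {i₁ j₁ i₂ j₂ : ℕ} (h₁ : IsPseudoMEM F k L P i₁ j₁)
    (h₂ : IsPseudoMEM F k L P i₂ j₂) (hi : i₁ < i₂) : j₁ < j₂ := by
  by_contra! hj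
  exact h₂.not_kmersPass_of_extends_left hi hj h₁.2.2.2.1

lemma end_eq_of_start_eq {i j₁ j₂ : ℕ} (h₁ : IsPseudoMEM F k L P i j₁)
    (h₂ : IsPseudoMEM F k L P i j₂) : j₁ = j₂ := by
  rcases lt_trichotomy j₁ j₂ with hj | hj | hj
  · exact absurd h₂.2.2.2.1 (h₁.not_kmersPass_of_extends_right le_rfl hj h₂.2.1)
  · exact hj
  · exact absurd h₁.2.2.2.1 (h₂.not_kmersPass_of_extends_right le_rfl hj h₁.2.1)

lemma end_lt_start_add {i₁ j₁ i₂ j₂ : ℕ} (h₁ : IsPseudoMEM F k L P i₁ j₁)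
    (h₂ : IsPseudoMEM F k L P i₂ j₂) (hi : i₁ < i₂) : j₁ < i₂ + (k - 2) := by
  by_contra! hov
  have hj := h₁.end_lt_of_start_lt h₂ hi
  exact h₁.not_kmersPass_of_extends_right le_rfl hj h₂.2.1
    (kmersPass_substr_glue h₁.2.2.2.1 h₂.2.2.2.1 (by have := h₁.1; omega) (by omega))

end IsPseudoMEM

lemma mem_pseudoMEMs {F : List α → Bool} {k L : ℕ} {P : List α} {ij : ℕ × ℕ} :
    ij ∈ pseudoMEMs F k L P ↔ IsPseudoMEM F k L P ij.1 ij.2 := by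
  classical
  simp only [pseudoMEMs, Finset.mem_filter, Finset.mem_product, Finset.mem_range,
    and_iff_right_iff_imp]
  exact fun h => ⟨by have := h.1; have := h.2.1; omega, h.2.1⟩

lemma exists_isPseudoMEM_of_kmersPass {F : List α → Bool} {k L : ℕ} {P : List α} {a b : ℕ}
    (hab : a ≤ b) (hb : b < P.length) (hL : L ≤ b - a + 1)
    (hpass : kmersPass F k (substr P a b)) : ∃ i j, IsPseudoMEM F k L P i j := by
  classical
  set C := (Finset.range P.length ×ˢ Finset.range P.length).filter
    fun ij : ℕ × ℕ => ij.1 ≤ a ∧ b ≤ ij.2 ∧ kmersPass F k (substr P ij.1 ij.2) with hC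
  have mem_C {ij : ℕ × ℕ} : ij ∈ C ↔ ij.1 < P.length ∧ ij.2 < P.length ∧ ij.1 ≤ a ∧
      b ≤ ij.2 ∧ kmersPass F k (substr P ij.1 ij.2) := by
    simp [hC, and_assoc]
  have hab_mem : (a, b) ∈ C := mem_C.2 ⟨by omega, hb, le_rfl, le_rfl, hpass⟩
  obtain ⟨⟨i, j⟩, hx, hmax⟩ := Finset.exists_max_image C (fun ij => ij.2 - ij.1) ⟨_, hab_mem⟩
  obtain ⟨hi, hj, hia, hbj, hij⟩ := mem_C.1 hx
  refine ⟨i, j, by omega, hj, by omega, hij, ?_, ?_⟩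
  · refine or_iff_not_imp_left.2 fun hi0 hext => ?_
    have := hmax (i - 1, j) (mem_C.2 ⟨by omega, hj, by omega, hbj, hext⟩)
    omega
  · refine or_iff_not_imp_left.2 fun hjP hext => ?_
    have := hmax (i, j + 1) (mem_C.2 ⟨hi, by omega, hia, by omega, hext⟩)
    omega

lemma sum_interval_length_le {S : Finset (ℕ × ℕ)} {c M : ℕ}
    (hle : ∀ p ∈ S, p.1 ≤ p.2) (hinj : Set.InjOn Prod.fst (S : Set (ℕ × ℕ)))
    (hov : ∀ p ∈ S, ∀ q ∈ S, p.1 < q.1 → p.2 < q.1 + c) (hM : ∀ p ∈ S, p.2 < M) :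
    ∑ p ∈ S, (p.2 - p.1 + 1) ≤ M + (S.card - 1) * c := by
  classical
  -- explicit instances: otherwise `induction` turns them into extra alternatives
  induction S using @Finset.induction_on_max_value ℕ (ℕ × ℕ) inferInstance inferInstance Prod.fst
    generalizing M with
  | empty => simp
  | insert a s has hmax ih =>
    simp only [Finset.mem_insert, forall_eq_or_imp] at hle hov hM
    have hlt : ∀ x ∈ s, x.1 < a.1 := fun x hx => Nat.lt_of_le_of_ne (hmax x hx) fun h =>
      has (hinj (by simp [hx]) (by simp) h ▸ hx)
    have hs := ih hle.2 (hinj.mono (Finset.coe_subset.2 (Finset.subset_insert a s)))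
      (fun p hp q hq => hov.2 p hp |>.2 q hq) (M := a.1 + c)
      (fun x hx => hov.2 x hx |>.1 (hlt x hx))
    rw [Finset.sum_insert has, Finset.card_insert_of_notMem has, Nat.add_sub_cancel]
    rcases s.eq_empty_or_nonempty with rfl | hne
    · simp only [Finset.sum_empty, Finset.card_empty]
      omega
    · have : (s.card - 1) * c + c = s.card * c := by
        rw [← Nat.succ_mul, Nat.succ_eq_add_one, Nat.sub_add_cancel hne.card_pos]
      have := hle.1
      omega

theorem pseudoMEMs_total_length_general (F : List α → Bool) (k L m : ℕ) (P : List α)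
    (hm : P.length = m)
    (hex : ∃ a b, a ≤ b ∧ b < P.length ∧ b - a + 1 = L ∧
      kmersPass F k (substr P a b)) :
    (pseudoMEMs F k L P).Nonempty ∧
    ∑ ij ∈ pseudoMEMs F k L P, (ij.2 - ij.1 + 1) ≤
      m + ((pseudoMEMs F k L P).card - 1) * (k - 2) := by
  obtain ⟨a, b, hab, hb, hL, hpass⟩ := hex
  obtain ⟨i, j, hij⟩ := exists_isPseudoMEM_of_kmersPass hab hb hL.ge hpass
  refine ⟨⟨(i, j), mem_pseudoMEMs.2 hij⟩, hm ▸ sum_interval_length_le ?_ ?_ ?_ ?_⟩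
  · exact fun p hp => (mem_pseudoMEMs.1 hp).1
  · exact fun p hp q hq h => Prod.ext h
      ((mem_pseudoMEMs.1 hp).end_eq_of_start_eq (h ▸ mem_pseudoMEMs.1 hq))
  · exact fun p hp q hq => (mem_pseudoMEMs.1 hp).end_lt_start_add (mem_pseudoMEMs.1 hq)
  · exact fun p hp => (mem_pseudoMEMs.1 hp).2.1

/-- if `P` (of length `m`) has a substring of length `L` all of
whose `k`-mers pass `F`, then `P` has at least one pseudo-MEM, and the total
length of all pseudo-MEMs of `P` is at most
`m + (number of pseudo-MEMs − 1)·(k − 2)`. -/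
theorem pseudoMEMs_total_length (F : List α → Bool) (k L m : ℕ) (P : List α)
    (hk : 2 ≤ k) (hkL : k < L) (hm : P.length = m)
    (hex : ∃ a b, a ≤ b ∧ b < P.length ∧ b - a + 1 = L ∧
      kmersPass F k (substr P a b)) :
    (pseudoMEMs F k L P).Nonempty ∧
    ∑ ij ∈ pseudoMEMs F k L P, (ij.2 - ij.1 + 1) ≤
      m + ((pseudoMEMs F k L P).card - 1) * (k - 2) :=
  pseudoMEMs_total_length_general F k L m P hm hex
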